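/- Let φ: K[x₁,…,xₙ] → K[t₁,…,t_m] be a ring homomorphism and J = ⟨x_i − φ(x_i) : i ∈ [n]⟩ the associated elimination ideal in K[x₁,…,xₙ,t₁,…,t_m]. A vector ω ∈ ℝ^{n+m} lies in the homogeneity space C₀(J) if and only if in_ω(x_i − φ(x_i)) = x_i − φ(x_i) for all i ∈ [n]. -/

import Mathlib

open MvPolynomial

noncomputable section

open scoped Classical

/-- Weight of an exponent vector with respect to a weight vector `ω`. -/
def wt {σ : Type*} [Fintype σ] (ω : σ → ℝ) (α : σ →₀ ℕ) : ℝ := ∑ j, ω j * α j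

/-- The initial form of a polynomial: the sum of its terms of minimal `ω`-weight. -/
def initialForm {K : Type*} [Field K] {σ : Type*} [Fintype σ] (ω : σ → ℝ)
    (f : MvPolynomial σ K) : MvPolynomial σ K :=
  ∑ α ∈ f.support.filter (fun α => ∀ β ∈ f.support, wt ω α ≤ wt ω β),
    monomial α (f.coeff α)

/-- The initial ideal of `I` with respect to `ω`. -/
def initialIdeal {K : Type*} [Field K] {σ : Type*} [Fintype σ] (ω : σ → ℝ)
    (I : Ideal (MvPolynomial σ K)) : Ideal (MvPolynomial σ K) :=
  Ideal.span {g | ∃ f ∈ I, g = initialForm ω f}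

/-- The homogeneity space of an ideal. -/
def homogeneitySpace {K : Type*} [Field K] {σ : Type*} [Fintype σ]
    (I : Ideal (MvPolynomial σ K)) : Set (σ → ℝ) :=
  {ω | initialIdeal ω I = I}

/-- The elimination (graph) ideal of a polynomial map `φ`, living in
`K[x₁,…,xₙ,t₁,…,t_m]`. -/
def graphIdeal {K : Type*} [Field K] {n m : ℕ}
    (φ : MvPolynomial (Fin n) K →ₐ[K] MvPolynomial (Fin m) K) :
    Ideal (MvPolynomial (Fin n ⊕ Fin m) K) :=
  Ideal.span (Set.range fun i : Fin n =>
    X (Sum.inl i) - rename Sum.inr (φ (X i)))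

section Aux

variable {K : Type*} [Field K] {σ : Type*} [Fintype σ] (ω : σ → ℝ)

lemma wt_eq_weight (α : σ →₀ ℕ) : wt ω α = Finsupp.weight ω α := by
  rw [wt, Finsupp.weight_apply, Finsupp.sum,
    ← Finset.sum_subset (Finset.subset_univ α.support)
      (fun j _ hj => by simp [Finsupp.notMem_support_iff.mp hj])]
  exact Finset.sum_congr rfl fun j _ => by rw [nsmul_eq_mul, mul_comm]

lemma coeff_initialForm (f : MvPolynomial σ K) (β : σ →₀ ℕ) :
    coeff β (initialForm ω f) =
      if β ∈ f.support.filter (fun α => ∀ γ ∈ f.support, wt ω α ≤ wt ω γ)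
      then f.coeff β else 0 := by
  rw [initialForm, coeff_sum]
  simp only [coeff_monomial]
  exact Finset.sum_ite_eq' _ _ _

lemma support_initialForm (f : MvPolynomial σ K) :
    (initialForm ω f).support =
      f.support.filter (fun α => ∀ γ ∈ f.support, wt ω α ≤ wt ω γ) := by
  ext β
  rw [mem_support_iff, coeff_initialForm]
  by_cases h : β ∈ f.support.filter (fun α => ∀ γ ∈ f.support, wt ω α ≤ wt ω γ)
  · simp [h, mem_support_iff.mp (Finset.mem_filter.mp h).1]
  · simp only [h, if_false]; tauto

lemma initialForm_eq_self_iff (f : MvPolynomial σ K) :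
    initialForm ω f = f ↔ ∀ α ∈ f.support, ∀ β ∈ f.support, wt ω α = wt ω β := by
  constructor
  · intro h α hα β hβ
    have key : ∀ γ ∈ f.support, ∀ δ ∈ f.support, wt ω γ ≤ wt ω δ := by
      intro γ hγ δ hδ
      have : γ ∈ f.support.filter (fun α => ∀ γ' ∈ f.support, wt ω α ≤ wt ω γ') := by
        rw [← support_initialForm, h]; exact hγ
      exact (Finset.mem_filter.mp this).2 δ hδ
    exact le_antisymm (key α hα β hβ) (key β hβ α hα)
  · intro h
    ext β
    rw [coeff_initialForm]
    split_ifs with hβ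
    · rfl
    · by_cases hm : β ∈ f.support
      · exact absurd (Finset.mem_filter.mpr ⟨hm, fun γ hγ => le_of_eq (h β hm γ hγ)⟩) hβ
      · exact (mem_support_iff.not_left.mp hm).symm

lemma initialForm_zero : initialForm ω (0 : MvPolynomial σ K) = 0 := by
  simp [initialForm]

lemma exists_initialForm_eq_component {f : MvPolynomial σ K} (hf : f ≠ 0) :
    ∃ c : ℝ, initialForm ω f = weightedHomogeneousComponent ω c f := by
  obtain ⟨β₀, hβ₀, hmin⟩ := Finset.exists_min_image f.support (wt ω) (support_nonempty.mpr hf)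
  refine ⟨Finsupp.weight ω β₀, ?_⟩
  ext γ
  rw [coeff_initialForm, coeff_weightedHomogeneousComponent]
  by_cases hγ : γ ∈ f.support
  · by_cases hw : Finsupp.weight ω γ = Finsupp.weight ω β₀
    · rw [if_pos, if_pos hw]
      refine Finset.mem_filter.mpr ⟨hγ, fun δ hδ => ?_⟩
      calc wt ω γ = wt ω β₀ := by rw [wt_eq_weight, wt_eq_weight, hw]
        _ ≤ wt ω δ := hmin δ hδ
    · rw [if_neg, if_neg hw]
      intro hmem
      apply hw
      have h1 : wt ω γ ≤ wt ω β₀ := (Finset.mem_filter.mp hmem).2 β₀ hβ₀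
      have h2 : wt ω β₀ ≤ wt ω γ := hmin γ hγ
      rw [← wt_eq_weight, ← wt_eq_weight]
      exact le_antisymm h1 h2
  · rw [mem_support_iff.not_left.mp hγ]
    simp

lemma homog_of_initialForm_eq_self {f : MvPolynomial σ K} (h : initialForm ω f = f) :
    ∃ c : ℝ, f.IsWeightedHomogeneous ω c := by
  by_cases hf : f = 0
  · exact ⟨0, by intro d hd; rw [hf] at hd; simp at hd⟩
  · obtain ⟨β₀, hβ₀⟩ := support_nonempty.mpr hf
    refine ⟨Finsupp.weight ω β₀, fun d hd => ?_⟩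
    have := (initialForm_eq_self_iff ω f).mp h d (mem_support_iff.mpr hd) β₀ hβ₀
    rw [wt_eq_weight, wt_eq_weight] at this
    exact this

end Aux

section Main

variable {K : Type*} [Field K] {n m : ℕ}
  (φ : MvPolynomial (Fin n) K →ₐ[K] MvPolynomial (Fin m) K)
  (ω : Fin n ⊕ Fin m → ℝ)

/-- The substitution map `x_i ↦ φ(x_i)`, `t_j ↦ t_j` (inside the big ring). -/
def psiMap : MvPolynomial (Fin n ⊕ Fin m) K →ₐ[K] MvPolynomial (Fin n ⊕ Fin m) K :=
  aeval (Sum.elim (fun i => rename Sum.inr (φ (X i)))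
    (fun j => (X (Sum.inr j) : MvPolynomial (Fin n ⊕ Fin m) K)))

lemma psiMap_gen (i : Fin n) :
    psiMap φ (X (Sum.inl i) - rename Sum.inr (φ (X i))) = 0 := by
  rw [map_sub, sub_eq_zero, psiMap, aeval_X, aeval_rename]
  rw [rename_eq_aeval]
  rfl

lemma psiMap_mem_graphIdeal {p : MvPolynomial (Fin n ⊕ Fin m) K}
    (hp : p ∈ graphIdeal φ) : psiMap φ p = 0 := by
  have hle : graphIdeal φ ≤ RingHom.ker (psiMap φ).toRingHom := by
    rw [graphIdeal, Ideal.span_le]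
    rintro x ⟨j, rfl⟩
    exact RingHom.mem_ker.mpr (psiMap_gen φ j)
  exact RingHom.mem_ker.mp (hle hp)

lemma psiMap_fixed {d : MvPolynomial (Fin n ⊕ Fin m) K}
    (hd : ∀ α ∈ d.support, ∀ j, α (Sum.inl j) = 0) : psiMap φ d = d := by
  calc psiMap φ d = psiMap φ (∑ α ∈ d.support, monomial α (coeff α d)) := by rw [← as_sum]
    _ = ∑ α ∈ d.support, psiMap φ (monomial α (coeff α d)) := map_sum _ _ _
    _ = ∑ α ∈ d.support, monomial α (coeff α d) := by
        refine Finset.sum_congr rfl fun α hα => ?_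
        rw [psiMap, aeval_monomial, monomial_eq, algebraMap_eq]
        congr 1
        refine Finsupp.prod_congr fun j hj => ?_
        rcases j with j | j
        · exact absurd (hd α hα j) (Finsupp.mem_support_iff.mp hj)
        · rfl
    _ = d := (as_sum d).symm

lemma psiMap_eq_zero_imp {d : MvPolynomial (Fin n ⊕ Fin m) K}
    (hdJ : d ∈ graphIdeal φ)
    (hd : ∀ α ∈ d.support, ∀ j, α (Sum.inl j) = 0) : d = 0 := by
  rw [← psiMap_fixed φ hd]
  exact psiMap_mem_graphIdeal φ hdJ

lemma rename_support_inl_eq_zero (q : MvPolynomial (Fin m) K) :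
    ∀ β ∈ (rename (Sum.inr : Fin m → Fin n ⊕ Fin m) q).support, ∀ j, β (Sum.inl j) = 0 := by
  intro β hβ j
  rw [support_rename_of_injective Sum.inr_injective] at hβ
  obtain ⟨γ, -, rfl⟩ := Finset.mem_image.mp hβ
  exact Finsupp.mapDomain_notin_range _ _ (by simp)

lemma coeff_single_inl (i : Fin n) :
    coeff (Finsupp.single (Sum.inl i) 1)
      (X (Sum.inl i) - rename Sum.inr (φ (X i)) : MvPolynomial (Fin n ⊕ Fin m) K) = 1 := by
  rw [coeff_sub, coeff_X]
  have h : Finsupp.single (Sum.inl i : Fin n ⊕ Fin m) 1 ∉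
      (rename (Sum.inr : Fin m → Fin n ⊕ Fin m) (φ (X i))).support := by
    intro hmem
    have := rename_support_inl_eq_zero (φ (X i)) _ hmem i
    simp at this
  rw [notMem_support_iff.mp h, sub_zero, if_pos rfl]

lemma gen_ne_zero (i : Fin n) :
    (X (Sum.inl i) - rename Sum.inr (φ (X i)) : MvPolynomial (Fin n ⊕ Fin m) K) ≠ 0 := by
  intro h0
  have := coeff_single_inl φ i
  rw [h0] at this
  simp at this

lemma gen_support_structure (i : Fin n) :
    ∀ α ∈ (X (Sum.inl i) - rename Sum.inr (φ (X i)) :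
        MvPolynomial (Fin n ⊕ Fin m) K).support,
      α ≠ Finsupp.single (Sum.inl i) 1 → ∀ j, α (Sum.inl j) = 0 := by
  intro α hα hne j
  have h := support_sub _ _ _ hα
  rw [Finset.mem_union, support_X] at h
  rcases h with h | h
  · exact absurd (Finset.mem_singleton.mp h) hne
  · exact rename_support_inl_eq_zero _ α h j

end Main

/-- `ω ∈ C₀(J)` iff each generator `x_i − φ(x_i)` equals its initial form. -/
theorem mem_homogeneitySpace_graphIdeal_iff {K : Type*} [Field K] {n m : ℕ}
    (φ : MvPolynomial (Fin n) K →ₐ[K] MvPolynomial (Fin m) K)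
    (ω : Fin n ⊕ Fin m → ℝ) :
    ω ∈ homogeneitySpace (graphIdeal φ) ↔
      ∀ i : Fin n,
        initialForm ω (X (Sum.inl i) - rename Sum.inr (φ (X i))) =
          X (Sum.inl i) - rename Sum.inr (φ (X i)) := by
  constructor
  · -- forward direction
    intro h i
    set g : MvPolynomial (Fin n ⊕ Fin m) K :=
      X (Sum.inl i) - rename Sum.inr (φ (X i)) with hgdef
    have hinJ : g ∈ graphIdeal φ := Ideal.subset_span ⟨i, rfl⟩
    have hIn : initialForm ω g ∈ graphIdeal φ := by
      have hmem : initialForm ω g ∈ initialIdeal ω (graphIdeal φ) :=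
        Ideal.subset_span ⟨g, hinJ, rfl⟩
      rwa [h] at hmem
    by_cases hμ : Finsupp.single (Sum.inl i) 1 ∈
        g.support.filter (fun α => ∀ γ ∈ g.support, wt ω α ≤ wt ω γ)
    · -- x_i survives in the initial form
      have hdJ : g - initialForm ω g ∈ graphIdeal φ := Ideal.sub_mem _ hinJ hIn
      have hdsupp : ∀ α ∈ (g - initialForm ω g).support, ∀ j, α (Sum.inl j) = 0 := by
        intro α hα j
        have hc : coeff α (g - initialForm ω g) ≠ 0 := mem_support_iff.mp hα
        rw [coeff_sub, coeff_initialForm] at hc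
        by_cases hαS : α ∈ g.support.filter (fun α => ∀ γ ∈ g.support, wt ω α ≤ wt ω γ)
        · rw [if_pos hαS, sub_self] at hc; exact absurd rfl hc
        · rw [if_neg hαS, sub_zero] at hc
          exact gen_support_structure φ i α (mem_support_iff.mpr hc)
            (fun heq => hαS (heq ▸ hμ)) j
      have hd0 : g - initialForm ω g = 0 := psiMap_eq_zero_imp φ hdJ hdsupp
      have := sub_eq_zero.mp hd0
      exact this.symm
    · -- x_i does not survive: the initial form would be a nonzero poly in the t's
      exfalso
      have hsup : ∀ α ∈ (initialForm ω g).support, ∀ j, α (Sum.inl j) = 0 := by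
        intro α hα j
        rw [support_initialForm] at hα
        exact gen_support_structure φ i α (Finset.mem_filter.mp hα).1
          (fun heq => hμ (heq ▸ hα)) j
      have h0 : initialForm ω g = 0 := psiMap_eq_zero_imp φ hIn hsup
      obtain ⟨β₀, hβ₀, hmin⟩ := Finset.exists_min_image g.support (wt ω)
        (support_nonempty.mpr (gen_ne_zero φ i))
      have hβ₀S : β₀ ∈ (initialForm ω g).support := by
        rw [support_initialForm]
        exact Finset.mem_filter.mpr ⟨hβ₀, hmin⟩
      rw [h0] at hβ₀S
      simp at hβ₀S
  · -- reverse direction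
    intro hi
    letI : GradedAlgebra (weightedHomogeneousSubmodule K ω) := weightedGradedAlgebra K ω
    have hhom : (graphIdeal φ).IsHomogeneous (weightedHomogeneousSubmodule K ω) := by
      apply Ideal.homogeneous_span
      rintro x ⟨j, rfl⟩
      obtain ⟨c, hc⟩ := homog_of_initialForm_eq_self ω (hi j)
      exact ⟨c, (mem_weightedHomogeneousSubmodule K ω c _).mpr hc⟩
    show initialIdeal ω (graphIdeal φ) = graphIdeal φ
    apply le_antisymm
    · rw [initialIdeal, Ideal.span_le]
      rintro g ⟨f, hfJ, rfl⟩
      by_cases hf0 : f = 0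
      · rw [hf0, initialForm_zero]
        exact Ideal.zero_mem _
      · obtain ⟨c, hc⟩ := exists_initialForm_eq_component ω hf0
        rw [hc]
        have hdec := hhom c hfJ
        rwa [show ((DirectSum.decompose (weightedHomogeneousSubmodule K ω) f c :
            weightedHomogeneousSubmodule K ω c) : MvPolynomial (Fin n ⊕ Fin m) K) =
            weightedHomogeneousComponent ω c f from
          MvPolynomial.decompose'_apply K ω f c] at hdec
    · rw [graphIdeal, Ideal.span_le]
      rintro g ⟨i, rfl⟩
      exact Ideal.subset_span ⟨_, Ideal.subset_span ⟨i, rfl⟩, (hi i).symm⟩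

end
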